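/- Let p ≥ 2 and let aᵢ, bᵢ ∈ ℂ^{nᵢ} be nonzero vectors for 1 ≤ i ≤ p. The sum a₁ ⊗ ⋯ ⊗ a_p + b₁ ⊗ ⋯ ⊗ b_p is an elementary tensor (possibly zero) if and only if aᵢ is parallel to bᵢ for all indices i with at most one exception. -/

import Mathlib

noncomputable section

/-- The elementary tensor `a₁ ⊗ ⋯ ⊗ a_p` in `ℂ^{n₁} ⊗ ⋯ ⊗ ℂ^{n_p}`. -/
def tensP {p : ℕ} {n : Fin p → ℕ} (a : ∀ i, EuclideanSpace ℂ (Fin (n i))) :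
    EuclideanSpace ℂ (∀ i, Fin (n i)) :=
  WithLp.toLp 2 fun f => ∏ i, a i (f i)

/-! If `aₖ` and `bₖ` are not parallel, some minor `aₖ(y₁) bₖ(y₂) - aₖ(y₂) bₖ(y₁)` is nonzero.
Reading `⊗a + ⊗b = ⊗v` on the slices `y₁` and `y₂` of the `k`-th factor and eliminating shows
that `⊗_{i ≠ k} aᵢ` and `⊗_{i ≠ k} bᵢ` are both multiples of `⊗_{i ≠ k} vᵢ`, hence of each
other, and proportional elementary tensors with nonzero factors have parallel factors. So a
second non-parallel index `j ≠ k` is impossible. Conversely, if `bᵢ = cᵢ aᵢ` for all `i ≠ j`,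
the sum is the elementary tensor with `j`-th factor `aⱼ + (∏ᵢ cᵢ) bⱼ` and other factors `aᵢ`. -/

open Finset Function

section Slices

variable {K X Y : Type*} [Field K]

lemma exists_mul_sub_mul_ne_zero {u w : X → K} (hu : u ≠ 0) (hw : ∀ c : K, w ≠ c • u) :
    ∃ x y, u x * w y - u y * w x ≠ 0 := by
  by_contra! h
  obtain ⟨x₀, hx₀⟩ := ne_iff.mp hu
  refine hw (w x₀ / u x₀) (funext fun y => ?_)
  rw [Pi.smul_apply, smul_eq_mul, div_mul_eq_mul_div, eq_div_iff hx₀]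
  linear_combination h x₀ y

lemma exists_eq_smul_of_add_eq_mul {α β γ : X → K} {A B C : Y → K}
    (hsum : ∀ x y, α x * A y + β x * B y = γ x * C y)
    (hα : α ≠ 0) (hβ : ∀ c : K, β ≠ c • α) (hA : A ≠ 0) : ∃ c : K, B = c • A := by
  obtain ⟨x₁, x₂, hd⟩ := exists_mul_sub_mul_ne_zero hα hβ
  set d := α x₁ * β x₂ - α x₂ * β x₁
  set L := β x₂ * γ x₁ - β x₁ * γ x₂
  set M := α x₁ * γ x₂ - α x₂ * γ x₁
  have hAC : ∀ y, d * A y = L * C y := fun y => by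
    linear_combination β x₂ * hsum x₁ y - β x₁ * hsum x₂ y
  have hBC : ∀ y, d * B y = M * C y := fun y => by
    linear_combination α x₁ * hsum x₂ y - α x₂ * hsum x₁ y
  obtain ⟨y₀, hy₀⟩ := ne_iff.mp hA
  have hL : L ≠ 0 := fun hL0 => hy₀ (by simpa [hL0, hd] using hAC y₀)
  refine ⟨M / L, funext fun y => ?_⟩
  rw [Pi.smul_apply, smul_eq_mul, div_mul_eq_mul_div, eq_div_iff hL]
  apply mul_left_cancel₀ hd
  linear_combination L * hBC y - M * hAC y

end Slices

section Products

variable {ι K : Type*} {κ : ι → Type*} [DecidableEq ι]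

lemma prod_apply_update_of_mem [CommMonoid K] (g : ∀ i, κ i → K) {s : Finset ι} {k : ι}
    (hk : k ∈ s) (f : ∀ i, κ i) (y : κ k) :
    ∏ i ∈ s, g i (update f k y i) = g k y * ∏ i ∈ s.erase k, g i (f i) := by
  simp_rw [apply_update g f]
  rw [prod_update_of_mem hk, sdiff_singleton_eq_erase]

lemma exists_eq_smul_of_prod_eq_smul_prod [Field K] {a b : ∀ i, κ i → K} {s : Finset ι} {j : ι}
    (hj : j ∈ s) (hb : ∀ i, b i ≠ 0) {c : K}
    (h : (fun f : ∀ i, κ i => ∏ i ∈ s, b i (f i)) = c • fun f : ∀ i, κ i => ∏ i ∈ s, a i (f i)) :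
    ∃ c' : K, b j = c' • a j := by
  choose f hf using fun i => ne_iff.mp (hb i)
  have hR : ∏ i ∈ s.erase j, b i (f i) ≠ 0 := prod_ne_zero_iff.mpr fun i _ => hf i
  refine ⟨c * (∏ i ∈ s.erase j, a i (f i)) / ∏ i ∈ s.erase j, b i (f i), funext fun x => ?_⟩
  have hx := congrFun h (update f j x)
  simp only [Pi.smul_apply, smul_eq_mul, prod_apply_update_of_mem _ hj] at hx
  rw [Pi.smul_apply, smul_eq_mul, div_mul_eq_mul_div, eq_div_iff hR]
  linear_combination hx

end Products

section ElementaryTensors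

variable {ι K : Type*} {κ : ι → Type*} [Fintype ι]

def elemTensor [CommMonoid K] (a : ∀ i, κ i → K) : (∀ i, κ i) → K := fun f => ∏ i, a i (f i)

lemma exists_elemTensor_eq_add_of_parallel [DecidableEq ι] [CommSemiring K]
    {a b : ∀ i, κ i → K} {j : ι} (h : ∀ i ≠ j, ∃ c : K, b i = c • a i) :
    ∃ v, elemTensor a + elemTensor b = elemTensor v := by
  obtain ⟨c, hc⟩ : ∃ c : ι → K, ∀ i ≠ j, b i = c i • a i :=
    ⟨fun i => if hi : i = j then 0 else (h i hi).choose,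
      fun i hi => by simpa [hi] using (h i hi).choose_spec⟩
  refine ⟨update a j (a j + (∏ i ∈ univ.erase j, c i) • b j), funext fun f => ?_⟩
  have hb : ∏ i ∈ univ.erase j, b i (f i) =
      (∏ i ∈ univ.erase j, c i) * ∏ i ∈ univ.erase j, a i (f i) := by
    rw [← prod_mul_distrib]
    exact prod_congr rfl fun i hi => by rw [hc i (ne_of_mem_erase hi)]; rfl
  have hv : ∏ i ∈ univ.erase j, update a j (a j + (∏ i ∈ univ.erase j, c i) • b j) i (f i) =
      ∏ i ∈ univ.erase j, a i (f i) :=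
    prod_congr rfl fun i hi => by rw [update_of_ne (ne_of_mem_erase hi)]
  simp only [elemTensor, Pi.add_apply, ← mul_prod_erase univ _ (mem_univ j), hb, hv, update_self,
    Pi.smul_apply, smul_eq_mul]
  ring

theorem elemTensor_add_ne_of_not_parallel [DecidableEq ι] [Field K] {a b : ∀ i, κ i → K}
    (ha : ∀ i, a i ≠ 0) (hb : ∀ i, b i ≠ 0) {j k : ι} (hjk : j ≠ k) (hj : ∀ c : K, b j ≠ c • a j)
    (hk : ∀ c : K, b k ≠ c • a k) (v : ∀ i, κ i → K) :
    elemTensor a + elemTensor b ≠ elemTensor v := by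
  intro hv
  have hsum : ∀ x (g : ∀ i, κ i),
      a k x * ∏ i ∈ univ.erase k, a i (g i) + b k x * ∏ i ∈ univ.erase k, b i (g i) =
        v k x * ∏ i ∈ univ.erase k, v i (g i) := fun x g => by
    simpa only [elemTensor, Pi.add_apply, prod_apply_update_of_mem _ (mem_univ k)]
      using congrFun hv (update g k x)
  choose f hf using fun i => ne_iff.mp (ha i)
  have hA : (fun g : ∀ i, κ i => ∏ i ∈ univ.erase k, a i (g i)) ≠ 0 :=
    ne_iff.mpr ⟨f, prod_ne_zero_iff.mpr fun i _ => hf i⟩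
  obtain ⟨c, hc⟩ := exists_eq_smul_of_add_eq_mul hsum (ha k) hk hA
  obtain ⟨c', hc'⟩ := exists_eq_smul_of_prod_eq_smul_prod (mem_erase.mpr ⟨hjk, mem_univ j⟩) hb hc
  exact hj c' hc'

theorem exists_elemTensor_eq_add_iff [Field K] [Nonempty ι] {a b : ∀ i, κ i → K}
    (ha : ∀ i, a i ≠ 0) (hb : ∀ i, b i ≠ 0) :
    (∃ v, elemTensor a + elemTensor b = elemTensor v) ↔ ∃ j, ∀ i ≠ j, ∃ c : K, b i = c • a i := by
  classical
  refine ⟨fun ⟨v, hv⟩ => ?_, fun ⟨j, hj⟩ => exists_elemTensor_eq_add_of_parallel hj⟩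
  by_contra! h
  obtain ⟨k, -, hk⟩ := h (Classical.arbitrary ι)
  obtain ⟨j, hjk, hj⟩ := h k
  exact elemTensor_add_ne_of_not_parallel ha hb hjk hj hk v hv

end ElementaryTensors

section EuclideanSpace

variable {p : ℕ} {n : Fin p → ℕ}

lemma tensP_eq_toLp_elemTensor (a : ∀ i, EuclideanSpace ℂ (Fin (n i))) :
    tensP a = WithLp.toLp 2 (elemTensor fun i => ⇑(a i)) :=
  rfl

lemma tensP_add_tensP_eq_tensP_iff {a b v : ∀ i, EuclideanSpace ℂ (Fin (n i))} :
    tensP a + tensP b = tensP v ↔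
      elemTensor (fun i => ⇑(a i)) + elemTensor (fun i => ⇑(b i)) = elemTensor fun i => ⇑(v i) := by
  rw [tensP_eq_toLp_elemTensor, tensP_eq_toLp_elemTensor, tensP_eq_toLp_elemTensor,
    ← WithLp.toLp_add, (WithLp.toLp_injective 2).eq_iff]

lemma exists_tensP_eq_add_iff {a b : ∀ i, EuclideanSpace ℂ (Fin (n i))} :
    (∃ v, tensP a + tensP b = tensP v) ↔
      ∃ v, elemTensor (fun i => ⇑(a i)) + elemTensor (fun i => ⇑(b i)) = elemTensor v := by
  simp only [tensP_add_tensP_eq_tensP_iff]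
  exact ⟨fun ⟨v, hv⟩ => ⟨_, hv⟩, fun ⟨v, hv⟩ => ⟨fun i => WithLp.toLp 2 (v i), hv⟩⟩

end EuclideanSpace

/-- For `p ≥ 2` and nonzero vectors `aᵢ, bᵢ`, the sum `a₁ ⊗ ⋯ ⊗ a_p + b₁ ⊗ ⋯ ⊗ b_p`
is an elementary tensor (possibly zero) iff `aᵢ ∥ bᵢ` for all indices `i`
with at most one exception. -/
theorem stmt5 {p : ℕ} (hp : 2 ≤ p) {n : Fin p → ℕ}
    (a b : ∀ i, EuclideanSpace ℂ (Fin (n i)))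
    (ha : ∀ i, a i ≠ 0) (hb : ∀ i, b i ≠ 0) :
    (∃ v : ∀ i, EuclideanSpace ℂ (Fin (n i)), tensP a + tensP b = tensP v) ↔
    (∃ j : Fin p, ∀ i ≠ j, ∃ c : ℂ, b i = c • a i) := by
  have : Nonempty (Fin p) := ⟨⟨0, by omega⟩⟩
  have hofLp {u : ∀ i, EuclideanSpace ℂ (Fin (n i))} (hu : ∀ i, u i ≠ 0) : ∀ i, ⇑(u i) ≠ 0 :=
    fun i => (WithLp.ofLp_eq_zero 2).not.mpr (hu i)
  rw [exists_tensP_eq_add_iff, exists_elemTensor_eq_add_iff (hofLp ha) (hofLp hb)]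
  simp only [WithLp.ext_iff, WithLp.ofLp_smul]
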